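/- arXiv:2101.04015 — 12 statements merged into one kernel-verified Lean document; each statement's English description precedes it below -/
import Mathlib

section
/- In a small category C, a morphism h : C' → C is a strict epimorphism if and only if there exists a funneling diagram F : D → C whose weakly terminal object D₀ satisfies F(D₀) = C', together with a colimit cocone on F with vertex C whose leg at D₀ is h. -/
open CategoryTheory CategoryTheory.Limits

universe w v u

/-- A morphism `h : D ⟶ X` is a strict epimorphism if every morphism `k : D ⟶ E`
coequalizing all parallel pairs coequalized by `h` factors uniquely through `h`. -/
def IsStrictEpi {C : Type u} [Category.{v} C] {D X : C} (h : D ⟶ X) : Prop :=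
  ∀ ⦃E : C⦄ (k : D ⟶ E),
    (∀ ⦃B : C⦄ (p q : B ⟶ D), p ≫ h = q ≫ h → p ≫ k = q ≫ k) →
    ∃! m : X ⟶ E, h ≫ m = k

/-!
For a strict epimorphism `h : C' ⟶ X`, take the category of arrows `p : B ⟶ C'` in which a
morphism `(B, p) ⟶ (B', p')` is any `f` with `f ≫ p' ≫ h = p ≫ h`. The arrow `𝟙 C'` is weakly
terminal, and a parallel pair `p, q` coequalized by `h` gives two morphisms `(B, p) ⟶ (C', 𝟙)`,
so a cocone on the forgetful diagram is a morphism out of `C'` coequalizing all such pairs: these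
are exactly the morphisms that factor uniquely through `h`.

Conversely, the leg `c.ι.app d₀` of a colimit cocone at a weakly terminal `d₀` is a strict
epimorphism: if `k` coequalizes every pair that this leg coequalizes, then `F.map t ≫ k` does not
depend on the choice of `t : d ⟶ d₀`, so these maps form a cocone, and its induced map out of the
colimit factors `k`.
-/

section OverThrough

variable {C : Type u} [Category.{v} C] {C' X : C} (h : C' ⟶ X)

abbrev OverThrough : Type _ := InducedCategory (Over X) (Over.map h).obj

namespace OverThrough

abbrev base : OverThrough h := Over.mk (𝟙 C')

abbrev diagram : OverThrough h ⥤ C := inducedFunctor _ ⋙ Over.forget X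

abbrev cocone : Cocone (diagram h) := (Over.forgetCocone X).whisker (inducedFunctor _)

lemma cocone_ι_app_base : (cocone h).ι.app (base h) = h := Category.id_comp h

variable {h}

def toBase (d : OverThrough h) (p : d.left ⟶ C') (w : p ≫ h = d.hom ≫ h) : d ⟶ base h :=
  InducedCategory.homMk (Over.homMk p (by simpa using w))

@[simp]
lemma diagram_map_toBase (d : OverThrough h) (p : d.left ⟶ C') (w : p ≫ h = d.hom ≫ h) :
    (diagram h).map (toBase d p w) = p := rfl

lemma nonempty_hom_base (d : OverThrough h) : Nonempty (d ⟶ base h) :=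
  ⟨toBase d d.hom rfl⟩

noncomputable def isColimitCocone (hh : IsStrictEpi h) : IsColimit (cocone h) := by
  refine IsColimit.ofExistsUnique fun s => ?_
  let k : C' ⟶ s.pt := s.ι.app (base h)
  have hk ⦃B : C⦄ (p q : B ⟶ C') (w : p ≫ h = q ≫ h) : p ≫ k = q ≫ k :=
    (s.w (toBase (Over.mk p) p rfl)).trans (s.w (toBase (Over.mk p) q w.symm)).symm
  obtain ⟨m, hm, huniq⟩ := hh k hk
  refine ⟨m, fun d => ?_, fun m' hm' => huniq m' ?_⟩
  · rw [← s.w (toBase d d.hom rfl), diagram_map_toBase]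
    exact (Category.assoc d.hom h m).trans (congrArg (d.hom ≫ ·) hm)
  · exact (congrArg (· ≫ m') (cocone_ι_app_base h).symm).trans (hm' (base h))

end OverThrough

end OverThrough

theorem isStrictEpi_ι_app_of_isColimit {J : Type*} [Category J] {C : Type*} [Category C]
    {F : J ⥤ C} {c : Cocone F} (hc : IsColimit c) {j₀ : J} (hj₀ : ∀ j, Nonempty (j ⟶ j₀)) :
    IsStrictEpi (c.ι.app j₀) := by
  intro E k hk
  let t j : j ⟶ j₀ := (hj₀ j).some
  have hcoeq {j : J} (f g : j ⟶ j₀) : F.map f ≫ k = F.map g ≫ k :=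
    hk _ _ ((c.w f).trans (c.w g).symm)
  let s : Cocone F :=
    { pt := E
      ι := { app j := F.map (t j) ≫ k
             naturality j j' f := by simpa using hcoeq (f ≫ t j') (t j) } }
  refine ⟨hc.desc s, ?_, fun m hm => hc.hom_ext fun j => ?_⟩
  · simpa [hc.fac s j₀, s] using hcoeq (t j₀) (𝟙 j₀)
  · rw [hc.fac, ← c.w (t j), Category.assoc, hm]

theorem stmt4 {C : Type} [SmallCategory C] {C' X : C} (h : C' ⟶ X) :
    IsStrictEpi h ↔
      ∃ (D : Cat.{0, 0}) (d₀ : D) (F : D ⥤ C) (hobj : F.obj d₀ = C')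
        (c : Limits.Cocone F) (hpt : c.pt = X),
        (∀ d : D, Nonempty (d ⟶ d₀)) ∧ Nonempty (IsColimit c) ∧
          c.ι.app d₀ = eqToHom hobj ≫ h ≫ eqToHom hpt.symm := by
  constructor
  · intro hh
    exact ⟨Cat.of (OverThrough h), OverThrough.base h, OverThrough.diagram h, rfl,
      OverThrough.cocone h, rfl, OverThrough.nonempty_hom_base,
      ⟨OverThrough.isColimitCocone hh⟩, by
        show _ = 𝟙 C' ≫ h ≫ 𝟙 X
        simp only [Category.id_comp, Category.comp_id]
        exact OverThrough.cocone_ι_app_base h⟩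
  · rintro ⟨D, d₀, F, rfl, c, rfl, hd₀, ⟨hc⟩, hleg⟩
    simpa [hleg] using isStrictEpi_ι_app_of_isColimit hc hd₀
end

section
/- A category has colimits of all multifunneling diagrams if and only if it has finite coproducts and colimits of all funneling diagrams. -/
open CategoryTheory CategoryTheory.Limits

universe w v u

/-!
Adjoin to `D` one object `apex`, with a morphism `d ⟶ apex` for each index `i` and morphism
`d ⟶ ds i`. When the `ds i` cover `D`, the apex is weakly terminal. The diagram `F` extends to
this category by sending the apex to `∐ i, F (ds i)`, and a cocone over the extension is the same
thing as a cocone over `F`: its leg at the apex is forced to be the map out of the coproduct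
induced by the legs at the `ds i`. Hence the colimit of the extended, funneling, diagram is a
colimit of `F`. Conversely, coproducts over `Fin n` and funneling colimits are special cases of
multifunneling colimits.
-/

namespace CategoryTheory.Limits

inductive Funnel {D : Type u} [Category.{v} D] {ι : Type v} (ds : ι → D) : Type u
  | of : D → Funnel ds
  | apex : Funnel ds

namespace Funnel

variable {D : Type u} [Category.{v} D] {ι : Type v} (ds : ι → D)

def Hom : Funnel ds → Funnel ds → Type v
  | of d, of d' => d ⟶ d'
  | of d, apex => Σ i, d ⟶ ds i
  | apex, of _ => PEmpty
  | apex, apex => PUnit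

instance : Category (Funnel ds) where
  Hom := Hom ds
  id
    | of d => 𝟙 d
    | apex => PUnit.unit
  comp {X Y Z} f g := match X, Y, Z, f, g with
    | of _, of _, of _, f, g => f ≫ g
    | of _, of _, apex, f, ⟨i, g⟩ => ⟨i, f ≫ g⟩
    | of _, apex, apex, f, _ => f
    | apex, apex, apex, _, _ => PUnit.unit
    | apex, of _, _, f, _ => f.elim
    | _, apex, of _, _, g => g.elim
  id_comp {X Y} f := match X, Y, f with
    | of _, of _, f => Category.id_comp f
    | of _, apex, ⟨i, g⟩ => congrArg (Sigma.mk i) (Category.id_comp g)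
    | apex, of _, f => f.elim
    | apex, apex, _ => rfl
  comp_id {X Y} f := match X, Y, f with
    | of _, of _, f => Category.comp_id f
    | of _, apex, _ => rfl
    | apex, of _, f => f.elim
    | apex, apex, _ => rfl
  assoc {W X Y Z} f g h := match W, X, Y, Z, f, g, h with
    | of _, of _, of _, of _, f, g, h => Category.assoc f g h
    | of _, of _, of _, apex, f, g, ⟨i, h⟩ => congrArg (Sigma.mk i) (Category.assoc f g h)
    | of _, of _, apex, apex, _, ⟨_, _⟩, _ => rfl
    | of _, apex, apex, apex, _, _, _ => rfl
    | apex, apex, apex, apex, _, _, _ => rfl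
    | apex, of _, _, _, f, _, _ => f.elim
    | _, apex, of _, _, _, g, _ => g.elim
    | _, _, apex, of _, _, _, h => h.elim

def homOf {d d' : D} (f : d ⟶ d') : (of d : Funnel ds) ⟶ of d' := f

def toApex {d : D} (i : ι) (f : d ⟶ ds i) : (of d : Funnel ds) ⟶ apex := ⟨i, f⟩

lemma nonempty_hom_apex (hds : ∀ d, ∃ i, Nonempty (d ⟶ ds i)) (X : Funnel ds) :
    Nonempty (X ⟶ apex) := by
  cases X with
  | of d =>
    obtain ⟨i, ⟨f⟩⟩ := hds d
    exact ⟨toApex ds i f⟩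
  | apex => exact ⟨𝟙 _⟩

variable {C : Type*} [Category C] (F : D ⥤ C) [HasCoproduct fun i => F.obj (ds i)]

noncomputable def extend : Funnel ds ⥤ C where
  obj
    | of d => F.obj d
    | apex => ∐ fun i => F.obj (ds i)
  map {X Y} f := match X, Y, f with
    | of _, of _, f => F.map f
    | of _, apex, ⟨i, f⟩ => F.map f ≫ Sigma.ι (fun i => F.obj (ds i)) i
    | apex, apex, _ => 𝟙 _
    | apex, of _, f => f.elim
  map_id
    | of d => F.map_id d
    | apex => rfl
  map_comp {X Y Z} f g := match X, Y, Z, f, g with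
    | of _, of _, of _, f, g => F.map_comp f g
    | of d, of d', apex, f, ⟨_, g⟩ => F.map_comp_assoc (f : d ⟶ d') g _
    | of _, apex, apex, ⟨_, _⟩, _ => (Category.comp_id _).symm
    | apex, apex, apex, _, _ => (Category.comp_id _).symm
    | apex, of _, _, f, _ => f.elim
    | _, apex, of _, _, g => g.elim

@[simp]
lemma extend_map_toApex {d : D} (i : ι) (f : d ⟶ ds i) :
    (extend ds F).map (toApex ds i f) = F.map f ≫ Sigma.ι (fun i => F.obj (ds i)) i :=
  rfl

def restrictCocone (c : Cocone (extend ds F)) : Cocone F where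
  pt := c.pt
  ι.app d := c.ι.app (of d)
  ι.naturality _ _ f := c.ι.naturality (homOf ds f)

noncomputable def extendCocone (s : Cocone F) : Cocone (extend ds F) where
  pt := s.pt
  ι.app
    | of d => s.ι.app d
    | apex => Sigma.desc fun i => s.ι.app (ds i)
  ι.naturality X Y f := match X, Y, f with
    | of _, of _, f => s.ι.naturality f
    | of _, apex, ⟨i, f⟩ => by
        change (F.map f ≫ Sigma.ι (fun i => F.obj (ds i)) i) ≫ _ = _ ≫ 𝟙 _
        simp
    | apex, apex, _ => (Category.id_comp _).trans (Category.comp_id _).symm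
    | apex, of _, f => f.elim

lemma ι_comp_app_apex (c : Cocone (extend ds F)) (i : ι) {X : C} (h : c.pt ⟶ X) :
    Sigma.ι (fun i => F.obj (ds i)) i ≫ c.ι.app apex ≫ h = c.ι.app (of (ds i)) ≫ h := by
  have w := c.w (toApex ds i (𝟙 (ds i)))
  simp only [extend_map_toApex, Functor.map_id, Category.id_comp] at w
  exact (Category.assoc _ _ _).symm.trans (congrArg (· ≫ h) w)

variable {ds F} in
noncomputable def isColimitRestrictCocone {c : Cocone (extend ds F)} (hc : IsColimit c) :
    IsColimit (restrictCocone ds F c) where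
  desc s := hc.desc (extendCocone ds F s)
  fac s d := hc.fac (extendCocone ds F s) (of d)
  uniq s m hm := hc.hom_ext fun X => by
    change c.pt ⟶ s.pt at m
    refine Eq.trans ?_ (hc.fac (extendCocone ds F s) X).symm
    cases X with
    | of d => exact hm d
    | apex =>
      exact Sigma.hom_ext _ _ fun i => (ι_comp_app_apex ds F c i m).trans
        ((hm (ds i)).trans (Sigma.ι_desc (fun i => s.ι.app (ds i)) i).symm)

lemma hasColimit_of_hasColimit_extend [HasColimit (extend ds F)] : HasColimit F :=
  ⟨⟨⟨_, isColimitRestrictCocone (colimit.isColimit (extend ds F))⟩⟩⟩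

end Funnel

end CategoryTheory.Limits

theorem stmt5 (C : Type u) [Category.{v} C] :
    (∀ (D : Type) [SmallCategory D] (F : D ⥤ C),
        (∃ (n : ℕ) (ds : Fin n → D), ∀ d : D, ∃ i, Nonempty (d ⟶ ds i)) →
        HasColimit F) ↔
      (HasFiniteCoproducts C ∧
        ∀ (D : Type) [SmallCategory D] (d₀ : D) (F : D ⥤ C),
          (∀ d : D, Nonempty (d ⟶ d₀)) → HasColimit F) := by
  constructor
  · intro h
    refine ⟨⟨fun n => ⟨fun F => ?_⟩⟩, fun D _ d₀ F hd => ?_⟩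
    · exact h _ F ⟨n, Discrete.mk, fun d => ⟨d.as, ⟨𝟙 d⟩⟩⟩
    · exact h D F ⟨1, fun _ => d₀, fun d => ⟨0, hd d⟩⟩
  · rintro ⟨_, h⟩ D _ F ⟨n, ds, hds⟩
    have := h (Funnel ds) .apex (Funnel.extend ds F) (Funnel.nonempty_hom_apex ds hds)
    exact Funnel.hasColimit_of_hasColimit_extend ds F
end

section
/- Let (C,J) be a small site and E = Sh(C,J). The colimit in E of any funneling diagram all of whose values are supercompact objects is again supercompact, and the colimit in E of any multifunneling diagram all of whose values are compact objects is again compact. -/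
open CategoryTheory CategoryTheory.Limits

universe w v u

/-- A family of morphisms into `X` is jointly epimorphic. -/
def JointlyEpic {C : Type u} [Category.{v} C] {I : Type w} {A : I → C} {X : C}
    (f : ∀ i, A i ⟶ X) : Prop :=
  ∀ ⦃Y : C⦄ (g h : X ⟶ Y), (∀ i, f i ≫ g = f i ≫ h) → g = h

/-- An object is supercompact if every jointly epimorphic family of morphisms into it
contains an epimorphism. -/
def IsSupercompact {C : Type u} [Category.{v} C] (X : C) : Prop :=
  ∀ {I : Type} (A : I → C) (f : ∀ i, A i ⟶ X), JointlyEpic f → ∃ i, Epi (f i)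

/-- An object is compact if every jointly epimorphic family of morphisms into it
contains a finite jointly epimorphic subfamily. -/
def IsCompactObj {C : Type u} [Category.{v} C] (X : C) : Prop :=
  ∀ {I : Type} (A : I → C) (f : ∀ i, A i ⟶ X), JointlyEpic f →
    ∃ s : Finset I, JointlyEpic (fun i : {j // j ∈ s} => f i.1)

/-!
Pulling a jointly epimorphic family back along an epimorphism `e : X ⟶ Y` (or along a finite
jointly epimorphic family) gives a jointly epimorphic family over `X`; an epimorphic member
(a finite jointly epimorphic subfamily) found there pushes forward to one over `Y`. Sheaf
categories have this base-change stability, since a family of sheaf morphisms is jointly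
epimorphic exactly when every section is locally in the image of some member. Finally, the
colimit of a funneling (multifunneling) diagram is covered by the colimit leg at the weakly
terminal object (the finitely many legs at the chosen objects).
-/

namespace CategoryTheory

def JointlyEpicIsStableUnderBaseChange (𝒞 : Type u) [Category.{v} 𝒞] [HasPullbacks 𝒞] : Prop :=
  ∀ ⦃I : Type w⦄ ⦃A : I → 𝒞⦄ ⦃X Y : 𝒞⦄ (f : ∀ i, A i ⟶ Y) (e : X ⟶ Y),
    JointlyEpic f → JointlyEpic fun i => pullback.snd (f i) e

section BaseChange

variable {𝒞 : Type u} [Category.{v} 𝒞] [HasPullbacks 𝒞]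

theorem IsSupercompact.of_epi (h𝒞 : JointlyEpicIsStableUnderBaseChange.{0} 𝒞) {X Y : 𝒞}
    (e : X ⟶ Y) [Epi e] (hX : IsSupercompact X) : IsSupercompact Y := by
  intro I A f hf
  obtain ⟨i, hi⟩ := hX _ _ (h𝒞 f e hf)
  have : Epi (pullback.fst (f i) e ≫ f i) := by
    rw [pullback.condition]
    infer_instance
  exact ⟨i, epi_of_epi (pullback.fst (f i) e) (f i)⟩

theorem IsCompactObj.of_jointlyEpic (h𝒞 : JointlyEpicIsStableUnderBaseChange.{0} 𝒞)
    {K : Type w} [Fintype K] {X : K → 𝒞} {Y : 𝒞} (e : ∀ k, X k ⟶ Y) (he : JointlyEpic e)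
    (hX : ∀ k, IsCompactObj (X k)) : IsCompactObj Y := by
  classical
  intro I A f hf
  choose s hs using fun k => hX k _ _ (h𝒞 f (e k) hf)
  refine ⟨Finset.univ.biUnion s, fun Z g h w => he g h fun k => ?_⟩
  refine hs k _ _ fun ⟨i, hi⟩ => ?_
  have hi' : i ∈ Finset.univ.biUnion s := Finset.mem_biUnion.2 ⟨k, Finset.mem_univ k, hi⟩
  simp only [← pullback.condition_assoc, w ⟨i, hi'⟩]

end BaseChange

namespace Limits.IsColimit

variable {𝒞 : Type u} [Category.{v} 𝒞] {D : Type*} [Category D] {F : D ⥤ 𝒞} {c : Cocone F}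

theorem jointlyEpic_ι (hc : IsColimit c) {K : Type w} (ds : K → D)
    (hds : ∀ d, ∃ k, Nonempty (d ⟶ ds k)) : JointlyEpic fun k => c.ι.app (ds k) := by
  intro Y g h w
  refine hc.hom_ext fun d => ?_
  obtain ⟨k, ⟨t⟩⟩ := hds d
  rw [← c.w t, Category.assoc, Category.assoc, w k]

theorem epi_ι (hc : IsColimit c) {d₀ : D} (hd₀ : ∀ d, Nonempty (d ⟶ d₀)) : Epi (c.ι.app d₀) :=
  ⟨fun g h w => hc.jointlyEpic_ι (fun _ : Unit => d₀) (fun d => ⟨(), hd₀ d⟩) g h fun _ => w⟩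

end Limits.IsColimit

namespace Sheaf

open Opposite

variable {C : Type u} [SmallCategory C] {J : GrothendieckTopology C}

theorem sieveOfSection_iSup_range_mem {I : Type w} {A : I → Sheaf J (Type u)}
    {X : Sheaf J (Type u)} {f : ∀ i, A i ⟶ X} (hf : JointlyEpic f) {U : Cᵒᵖ}
    (x : X.obj.obj U) : (⨆ i, Subfunctor.range (f i).hom).sieveOfSection x ∈ J U.unop := by
  set S := (⨆ i, Subfunctor.range (f i).hom).sheafify J
  let T : Sheaf J (Type u) := ⟨S.toFunctor, (isSheaf_iff_isSheaf_of_type J _).2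
    (Subfunctor.sheafify_isSheaf _ ((isSheaf_iff_isSheaf_of_type J _).1 X.property))⟩
  let ι : T ⟶ X := ⟨S.ι⟩
  have hrange : ∀ i, Subfunctor.range (f i).hom ≤ S :=
    fun i => (le_iSup (fun i => Subfunctor.range (f i).hom) i).trans (Subfunctor.le_sheafify J _)
  have : Epi ι := ⟨fun g h w => hf g h fun i => by
    rw [← show (⟨Subfunctor.lift (f i).hom (hrange i)⟩ : A i ⟶ T) ≫ ι = f i from rfl,
      Category.assoc, w, Category.assoc]⟩
  have : Mono ι := Sheaf.Hom.mono_of_presheaf_mono J _ ι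
  have : IsIso ι := isIso_of_mono_of_epi ι
  have : IsIso S.ι := inferInstanceAs (IsIso ((sheafToPresheaf J _).map ι))
  change x ∈ S.obj U
  rw [(Subfunctor.eq_top_iff_isIso S).2 this]
  trivial

theorem jointlyEpic_of_sieveOfSection_iSup_range_mem {I : Type w} {A : I → Sheaf J (Type u)}
    {X : Sheaf J (Type u)} (f : ∀ i, A i ⟶ X)
    (hf : ∀ (U : Cᵒᵖ) (x : X.obj.obj U),
      (⨆ i, Subfunctor.range (f i).hom).sieveOfSection x ∈ J U.unop) :
    JointlyEpic f := by
  intro Y g h w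
  refine Sheaf.hom_ext (NatTrans.ext (funext fun U => ConcreteCategory.hom_ext _ _ fun x => ?_))
  refine (((isSheaf_iff_isSheaf_of_type J _).1 Y.property).isSeparated _ (hf U x)).ext ?_
  intro V k hk
  obtain ⟨i, a, ha⟩ := Set.mem_iUnion.1 ((Subfunctor.iSup_obj _ _).le hk)
  have hw := congr_arg (fun φ => φ.hom.app (op V) a) (w i)
  dsimp at ha hw ⊢
  rw [← NatTrans.naturality_apply g.hom k.op x, ← NatTrans.naturality_apply h.hom k.op x, ← ha]
  exact hw

theorem jointlyEpicIsStableUnderBaseChange :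
    JointlyEpicIsStableUnderBaseChange.{w} (Sheaf J (Type u)) := by
  intro I A X Y f e hf
  refine jointlyEpic_of_sieveOfSection_iSup_range_mem _ fun U x => ?_
  refine J.superset_covering ?_ (sieveOfSection_iSup_range_mem hf (e.hom.app U x))
  intro V k hk
  obtain ⟨i, a, ha⟩ := Set.mem_iUnion.1 ((Subfunctor.iSup_obj _ _).le hk)
  obtain ⟨p, -, hp⟩ := Types.exists_of_isPullback ((IsPullback.of_hasPullback (f i) e).map
    (sheafToPresheaf J _ ⋙ (evaluation _ _).obj (op V))) a (X.obj.map k.op x)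
    (ha.trans (NatTrans.naturality_apply e.hom k.op x).symm)
  exact (Subfunctor.iSup_obj _ _).ge (Set.mem_iUnion.2 ⟨i, p, hp⟩)

end Sheaf

end CategoryTheory

theorem stmt6 {C : Type} [SmallCategory C] (J : GrothendieckTopology C)
    {D : Type} [SmallCategory D] (F : D ⥤ Sheaf J (Type)) (c : Limits.Cocone F)
    (hc : IsColimit c) :
    ((∃ d₀ : D, ∀ d : D, Nonempty (d ⟶ d₀)) → (∀ d, IsSupercompact (F.obj d)) →
      IsSupercompact c.pt) ∧
    ((∃ (n : ℕ) (ds : Fin n → D), ∀ d : D, ∃ i, Nonempty (d ⟶ ds i)) →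
      (∀ d, IsCompactObj (F.obj d)) → IsCompactObj c.pt) := by
  refine ⟨fun ⟨d₀, hd₀⟩ hF => ?_, fun ⟨n, ds, hds⟩ hF => ?_⟩
  · have := hc.epi_ι hd₀
    exact IsSupercompact.of_epi Sheaf.jointlyEpicIsStableUnderBaseChange (c.ι.app d₀) (hF d₀)
  · exact IsCompactObj.of_jointlyEpic Sheaf.jointlyEpicIsStableUnderBaseChange _
      (hc.jointlyEpic_ι ds hds) fun k => hF (ds k)
end

section
/- Let (C,J) be a small site such that the supercompact objects of E = Sh(C,J) form a separating family, and let C_s denote the full subcategory of E on the supercompact objects. Then a morphism of C_s is an epimorphism in E if and only if it is a strict epimorphism in C_s. -/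
open CategoryTheory CategoryTheory.Limits

universe w v u

/-- `h` is a strict epimorphism in the full subcategory of objects satisfying `P`:
every morphism `k` (with codomain in the subcategory) coequalizing all parallel pairs
(with domain in the subcategory) coequalized by `h` factors uniquely through `h`. -/
def IsStrictEpiIn {C : Type u} [Category.{v} C] (P : C → Prop) {D X : C}
    (h : D ⟶ X) : Prop :=
  ∀ ⦃E : C⦄, P E → ∀ (k : D ⟶ E),
    (∀ ⦃B : C⦄, P B → ∀ (p q : B ⟶ D), p ≫ h = q ≫ h → p ≫ k = q ≫ k) →
    ∃! m : X ⟶ E, h ≫ m = k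

/-
Epimorphisms of sheaves of types are regular: `f` is the coequalizer of some parallel pair, and as
supercompact sheaves separate, every `k` coequalizing the supercompact-indexed pairs that `f`
coequalizes already coequalizes that pair, so it factors through `f`.

Conversely, factor `f` through its image as `i ≫ p` with `i` epi and `p` mono. A quotient of a
supercompact sheaf is supercompact: pulling a jointly epic family on the quotient back along the
sections of `D` gives a jointly epic family of sheafified representables over `D`, one of which
must be epi. So the image is supercompact, strictness of `f` yields a section of `p`, and `f` is
epi.
-/

section StrictEpi

variable {C : Type u} [Category.{v} C] {P : C → Prop}

theorem isStrictEpiIn_of_isRegularEpi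
    (hsep : ∀ ⦃X Y : C⦄ (g h : X ⟶ Y), (∀ S, P S → ∀ u : S ⟶ X, u ≫ g = u ≫ h) → g = h)
    {D X : C} (f : D ⟶ X) [IsRegularEpi f] : IsStrictEpiIn P f := by
  intro E _ k hk
  have hkw : IsRegularEpi.left f ≫ k = IsRegularEpi.right f ≫ k :=
    hsep _ _ fun S hS u => by
      simpa using hk hS (u ≫ IsRegularEpi.left f) (u ≫ IsRegularEpi.right f)
        (by simp [IsRegularEpi.w])
  exact ⟨IsRegularEpi.desc f k hkw, IsRegularEpi.fac f k hkw,
    fun m hm => IsRegularEpi.uniq f k hkw m hm⟩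

theorem IsStrictEpiIn.epi_of_fac {D Z X : C} {f : D ⟶ X} (hf : IsStrictEpiIn P f)
    (i : D ⟶ Z) (p : Z ⟶ X) [Epi i] [Mono p] (fac : i ≫ p = f) (hZ : P Z) (hX : P X) :
    Epi f := by
  obtain ⟨m, hm, -⟩ := hf hZ i fun B _ a b hab => by
    rwa [← cancel_mono p, Category.assoc, Category.assoc, fac]
  have hmp : m ≫ p = 𝟙 X :=
    (hf hX f fun _ _ _ _ h => h).unique (by rw [← Category.assoc, hm, fac]) (Category.comp_id f)
  have : IsSplitEpi p := ⟨⟨⟨m, hmp⟩⟩⟩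
  rw [← fac]
  exact epi_comp i p

end StrictEpi

namespace CategoryTheory.Sheaf

open Opposite

section JointlySurjective

variable {C : Type u} [Category.{v} C] {J : GrothendieckTopology C}
  {I : Type*} {A : I → Sheaf J (Type w)} {X : Sheaf J (Type w)}

def jointRange (f : ∀ i, A i ⟶ X) : Subfunctor X.obj :=
  ⨆ i, Subfunctor.range (f i).hom

lemma mem_jointRange_obj {f : ∀ i, A i ⟶ X} {U : Cᵒᵖ} {x : X.obj.obj U} :
    x ∈ (jointRange f).obj U ↔ ∃ i a, (f i).hom.app U a = x := by
  simp [jointRange]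

variable (J) in
def IsLocallyJointlySurjective (f : ∀ i, A i ⟶ X) : Prop :=
  (jointRange f).sheafify J = ⊤

lemma IsLocallyJointlySurjective.sieveOfSection_mem {f : ∀ i, A i ⟶ X}
    (hf : IsLocallyJointlySurjective J f) {U : Cᵒᵖ} (x : X.obj.obj U) :
    (jointRange f).sieveOfSection x ∈ J U.unop := by
  change x ∈ ((jointRange f).sheafify J).obj U
  rw [hf]
  trivial

theorem jointlyEpic_of_isLocallyJointlySurjective {f : ∀ i, A i ⟶ X}
    (hf : IsLocallyJointlySurjective J f) : JointlyEpic f := by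
  intro Y g h hgh
  ext U x
  refine ((isSheaf_iff_isSheaf_of_type J Y.obj).1 Y.property).isSeparated _
    (hf.sieveOfSection_mem x) |>.ext ?_
  rintro V φ hφ
  change Y.obj.map φ.op (g.hom.app U x) = Y.obj.map φ.op (h.hom.app U x)
  obtain ⟨i, a, ha⟩ := mem_jointRange_obj.1 hφ
  rw [← NatTrans.naturality_apply, ← NatTrans.naturality_apply, ← ha]
  simpa using congr_arg (fun t => t.hom.app (op V) a) (hgh i)

theorem isLocallyJointlySurjective_of_jointlyEpic [HasSheafify J (Type w)]
    {f : ∀ i, A i ⟶ X} (hf : JointlyEpic f) : IsLocallyJointlySurjective J f := by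
  have hX : Presieve.IsSheaf J X.obj := (isSheaf_iff_isSheaf_of_type J X.obj).1 X.property
  let S : Sheaf J (Type w) := ⟨((jointRange f).sheafify J).toFunctor,
    (isSheaf_iff_isSheaf_of_type _ _).2 ((jointRange f).sheafify_isSheaf hX)⟩
  let ι : S ⟶ X := ⟨((jointRange f).sheafify J).ι⟩
  -- every `f i` factors through `ι`, so `ι` is epi, hence locally surjective
  have hι : Epi ι := ⟨fun u v huv => hf u v fun i => by
    have hi : Subfunctor.range (f i).hom ≤ (jointRange f).sheafify J :=
      (le_iSup (fun i => Subfunctor.range (f i).hom) i).trans ((jointRange f).le_sheafify J)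
    have hfac : (⟨Subfunctor.lift (f i).hom hi⟩ : A i ⟶ S) ≫ ι = f i := rfl
    rw [← hfac, Category.assoc, Category.assoc, huv]⟩
  have := (isLocallySurjective_iff_epi ι).2 hι
  rw [IsLocallySurjective, Presheaf.isLocallySurjective_iff_range_sheafify_eq_top'] at this
  rwa [IsLocallyJointlySurjective, ← (jointRange f).sheafify_sheafify hX,
    ← Subfunctor.range_ι ((jointRange f).sheafify J)]

end JointlySurjective

section Representable

variable {C : Type} [SmallCategory C] {J : GrothendieckTopology C}

variable (J) in
noncomputable def genericSection (c : C) :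
    ((presheafToSheaf J Type).obj (yoneda.obj c)).obj.obj (op c) :=
  (toSheafify J (yoneda.obj c)).app (op c) (𝟙 c)

noncomputable def homOfSection {F : Sheaf J Type} {c : C} (x : F.obj.obj (op c)) :
    (presheafToSheaf J Type).obj (yoneda.obj c) ⟶ F :=
  ((sheafificationAdjunction J Type).homEquiv (yoneda.obj c) F).symm (yonedaEquiv.symm x)

lemma homOfSection_comp {F G : Sheaf J Type} {c : C} (x : F.obj.obj (op c)) (α : F ⟶ G) :
    homOfSection x ≫ α = homOfSection (α.hom.app (op c) x) := by
  rw [homOfSection, homOfSection, ← yonedaEquiv_symm_naturality_right]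
  exact ((sheafificationAdjunction J Type).homEquiv_naturality_right_symm _ α).symm

@[simp]
lemma homOfSection_app_genericSection {F : Sheaf J Type} {c : C} (x : F.obj.obj (op c)) :
    (homOfSection x).hom.app (op c) (genericSection J c) = x := by
  have h : toSheafify J (yoneda.obj c) ≫ (homOfSection x).hom = yonedaEquiv.symm x :=
    toSheafify_sheafifyLift J _ F.property
  simpa [genericSection, yonedaEquiv_apply] using congr_arg yonedaEquiv h

theorem isSupercompact_of_epi {D A : Sheaf J Type} (hD : IsSupercompact D) (e : D ⟶ A) [Epi e] :
    IsSupercompact A := by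
  intro I T g hg
  -- sections of `D` whose image under `e` lifts along some `g j`, with a chosen lift
  let K := Σ (c : C) (j : I), {p : (T j).obj.obj (op c) × D.obj.obj (op c) //
    (g j).hom.app _ p.1 = e.hom.app _ p.2}
  have hK : JointlyEpic fun k : K => homOfSection k.2.2.1.2 := by
    apply jointlyEpic_of_isLocallyJointlySurjective
    rw [IsLocallyJointlySurjective, eq_top_iff]
    rintro ⟨c⟩ d -
    refine J.superset_covering ?_
      ((isLocallyJointlySurjective_of_jointlyEpic hg).sieveOfSection_mem (e.hom.app _ d))
    rintro c' φ hφ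
    obtain ⟨j, t, ht⟩ := mem_jointRange_obj.1 hφ
    refine mem_jointRange_obj.2 ⟨⟨c', j, ⟨(t, D.obj.map φ.op d), ?_⟩⟩, genericSection J c',
      homOfSection_app_genericSection _⟩
    rw [ht, NatTrans.naturality_apply]
  obtain ⟨⟨c, j, ⟨t, d⟩, hp⟩, hk⟩ := hD _ _ hK
  have : Epi (homOfSection t ≫ g j) := by
    rw [homOfSection_comp, hp, ← homOfSection_comp]
    exact epi_comp _ _
  exact ⟨j, epi_of_epi (homOfSection t) (g j)⟩

end Representable

end CategoryTheory.Sheaf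

open CategoryTheory.Sheaf

theorem stmt7 {C : Type} [SmallCategory C] (J : GrothendieckTopology C)
    (hsep : ∀ ⦃X Y : Sheaf J (Type)⦄ (g h : X ⟶ Y),
      (∀ (S : Sheaf J (Type)), IsSupercompact S → ∀ (u : S ⟶ X), u ≫ g = u ≫ h) →
        g = h)
    {D X : Sheaf J (Type)} (hD : IsSupercompact D) (hX : IsSupercompact X)
    (f : D ⟶ X) :
    Epi f ↔ IsStrictEpiIn IsSupercompact f := by
  refine ⟨fun _ => ?_, fun hf => ?_⟩
  · have := IsRegularEpiCategory.regularEpiOfEpi f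
    exact isStrictEpiIn_of_isRegularEpi hsep f
  · exact hf.epi_of_fac (toImage f) (imageι f) (toImage_ι f)
      (isSupercompact_of_epi hD (toImage f)) hX
end

section
/- Let (C,J) be a small site, E = Sh(C,J), and C_c the full subcategory of E on the compact objects. A family of morphisms of C_c with a common codomain is jointly epimorphic in C_c if and only if it is jointly epimorphic in E. -/
open CategoryTheory CategoryTheory.Limits

universe w v u

/-- A family of morphisms into `X` is jointly epimorphic in the full subcategory of
objects satisfying `P`. -/
def JointlyEpicIn {C : Type u} [Category.{v} C] (P : C → Prop) {I : Type w}
    {A : I → C} {X : C} (f : ∀ i, A i ⟶ X) : Prop :=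
  ∀ ⦃Y : C⦄, P Y → ∀ (g h : X ⟶ Y), (∀ i, f i ≫ g = f i ≫ h) → g = h

/-! Jointly epimorphic families of sheaves of types are exactly the jointly locally surjective
ones, hence they are stable under pullback. Pulling a jointly epimorphic family back along finitely
many maps out of compact sheaves that are jointly epimorphic onto its codomain shows that this
codomain is compact too; in particular the cokernel pair of any morphism into a compact sheaf is
compact. Now if `f` is jointly epimorphic against compact sheaves and `g, h : X ⟶ Y` agree on it,
the two legs of the cokernel pair of the equalizer `m` of `g` and `h` agree on `f`, so they are
equal, which makes `m` an epimorphism and forces `g = h`. -/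

open Opposite

lemma jointlyEpic_of_jointlyEpicIn {C : Type u} [Category.{v} C] [HasEqualizers C]
    [HasPushouts C] {P : C → Prop} {I : Type w} {A : I → C} {X : C} {f : ∀ i, A i ⟶ X}
    (hP : ∀ ⦃E : C⦄ (m : E ⟶ X), P (pushout m m)) (hf : JointlyEpicIn P f) : JointlyEpic f := by
  intro Y g h hgh
  let m := equalizer.ι g h
  have hm : pushout.inl m m = pushout.inr m m := hf (hP m) _ _ fun i => by
    rw [← equalizer.lift_ι (f i) (hgh i), Category.assoc, Category.assoc, pushout.condition]
  rw [← pushout.inl_desc g h (equalizer.condition g h), hm, pushout.inr_desc]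

namespace CategoryTheory.Sheaf

variable {C : Type u} [Category.{v} C] {J : GrothendieckTopology C}

lemma exists_pullback_snd_app_eq {B W Z : Sheaf J (Type w)} (u : B ⟶ Z) (e : W ⟶ Z) {c : Cᵒᵖ}
    (y : B.obj.obj c) (x : W.obj.obj c) (h : u.hom.app c y = e.hom.app c x) :
    ∃ p, (pullback.snd u e).hom.app c p = x := by
  obtain ⟨p, -, hp⟩ := Types.exists_of_isPullback
    ((IsPullback.of_hasPullback u e).map (sheafToPresheaf J _ ⋙ (evaluation _ _).obj c)) y x h
  exact ⟨p, hp⟩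

variable {I : Type w'} {A : I → Sheaf J (Type w)} {X : Sheaf J (Type w)}

lemma jointlyEpic_of_sheafify_iSup_range_eq_top {f : ∀ i, A i ⟶ X}
    (hf : (⨆ i, Subfunctor.range (f i).hom).sheafify J = ⊤) : JointlyEpic f := by
  intro Y g h hgh
  ext c x
  have hx : x ∈ ((⨆ i, Subfunctor.range (f i).hom).sheafify J).obj c := by simp [hf]
  apply ((isSheaf_iff_isSheaf_of_type _ _).1 Y.property).isSeparated _ hx |>.ext
  rintro d φ hφ
  simp only [Subfunctor.sieveOfSection, Subfunctor.iSup_obj, Set.mem_iUnion,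
    Subfunctor.range_obj, Set.mem_range] at hφ
  obtain ⟨i, y, hy⟩ := hφ
  change Y.obj.map φ.op (g.hom.app c x) = Y.obj.map φ.op (h.hom.app c x)
  rw [← NatTrans.naturality_apply, ← NatTrans.naturality_apply, ← hy]
  exact congr_arg (fun k => k.hom.app (op d) y) (hgh i)

variable [HasSheafify J (Type w)]

lemma sheafify_iSup_range_eq_top_of_jointlyEpic {f : ∀ i, A i ⟶ X} (hf : JointlyEpic f) :
    (⨆ i, Subfunctor.range (f i).hom).sheafify J = ⊤ := by
  set G := ⨆ i, Subfunctor.range (f i).hom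
  have hX := (isSheaf_iff_isSheaf_of_type _ _).1 X.property
  let S : Sheaf J (Type w) :=
    ⟨(G.sheafify J).toFunctor, (isSheaf_iff_isSheaf_of_type _ _).2 (G.sheafify_isSheaf hX)⟩
  let m : S ⟶ X := ObjectProperty.homMk (G.sheafify J).ι
  have hfac (i : I) : ∃ l : A i ⟶ S, l ≫ m = f i :=
    ⟨ObjectProperty.homMk (Subfunctor.lift (f i).hom
      ((le_iSup (fun i => Subfunctor.range (f i).hom) i).trans (G.le_sheafify J))), rfl⟩
  have hm : Epi m := ⟨fun g h hgh => hf g h fun i => by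
    obtain ⟨l, hl⟩ := hfac i
    rw [← hl, Category.assoc, Category.assoc, hgh]⟩
  have hm' := (Sheaf.isLocallySurjective_iff_epi m).2 hm
  rw [Sheaf.IsLocallySurjective, Presheaf.isLocallySurjective_iff_range_sheafify_eq_top'] at hm'
  change (Subfunctor.range (G.sheafify J).ι).sheafify J = ⊤ at hm'
  rwa [Subfunctor.range_ι, Subfunctor.sheafify_sheafify _ hX] at hm'

lemma jointlyEpic_iff_sheafify_iSup_range_eq_top {f : ∀ i, A i ⟶ X} :
    JointlyEpic f ↔ (⨆ i, Subfunctor.range (f i).hom).sheafify J = ⊤ :=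
  ⟨sheafify_iSup_range_eq_top_of_jointlyEpic, jointlyEpic_of_sheafify_iSup_range_eq_top⟩

lemma jointlyEpic_pullback_snd {Z W : Sheaf J (Type w)} {u : ∀ i, A i ⟶ Z}
    (hu : JointlyEpic u) (e : W ⟶ Z) : JointlyEpic (fun i => pullback.snd (u i) e) := by
  rw [jointlyEpic_iff_sheafify_iSup_range_eq_top, eq_top_iff] at hu ⊢
  rintro c x -
  refine J.superset_covering ?_ (hu c (Set.mem_univ (e.hom.app c x)))
  rintro d φ hφ
  simp only [Subfunctor.sieveOfSection, Subfunctor.iSup_obj, Set.mem_iUnion,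
    Subfunctor.range_obj, Set.mem_range] at hφ ⊢
  obtain ⟨i, y, hy⟩ := hφ
  rw [← NatTrans.naturality_apply] at hy
  exact ⟨i, exists_pullback_snd_app_eq (u i) e y _ hy⟩

lemma isCompactObj_of_jointlyEpic {ι : Type*} [Finite ι] {W : ι → Sheaf J (Type w)}
    {Z : Sheaf J (Type w)} (hW : ∀ k, IsCompactObj (W k)) {e : ∀ k, W k ⟶ Z}
    (he : JointlyEpic e) : IsCompactObj Z := by
  classical
  have := Fintype.ofFinite ι
  intro I B u hu
  choose s hs using fun k => hW k _ _ (jointlyEpic_pullback_snd hu (e k))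
  refine ⟨Finset.univ.biUnion s, fun Y g h hgh => he _ _ fun k => hs k _ _ fun i => ?_⟩
  rw [← pullback.condition_assoc, ← pullback.condition_assoc,
    hgh ⟨i, Finset.mem_biUnion.2 ⟨k, Finset.mem_univ k, i.2⟩⟩]

lemma isCompactObj_pushout {E : Sheaf J (Type w)} (hX : IsCompactObj X) (m : E ⟶ X) :
    IsCompactObj (pushout m m) :=
  isCompactObj_of_jointlyEpic (W := fun _ : Bool => X) (fun _ => hX)
    (e := fun b => bif b then pushout.inl m m else pushout.inr m m)
    fun _ _ _ hgh => pushout.hom_ext (hgh true) (hgh false)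

end CategoryTheory.Sheaf

theorem stmt8_general {C : Type} [SmallCategory C] (J : GrothendieckTopology C)
    {I : Type} {A : I → Sheaf J (Type)} {X : Sheaf J (Type)}
    (hX : IsCompactObj X)
    (f : ∀ i, A i ⟶ X) :
    JointlyEpicIn IsCompactObj f ↔ JointlyEpic f :=
  ⟨jointlyEpic_of_jointlyEpicIn fun _ m => Sheaf.isCompactObj_pushout hX m, fun hf Y _ => @hf Y⟩

theorem stmt8 {C : Type} [SmallCategory C] (J : GrothendieckTopology C)
    {I : Type} {A : I → Sheaf J (Type)} {X : Sheaf J (Type)}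
    (hA : ∀ i, IsCompactObj (A i)) (hX : IsCompactObj X)
    (f : ∀ i, A i ⟶ X) :
    JointlyEpicIn IsCompactObj f ↔ JointlyEpic f :=
  stmt8_general J hX f
end

section
/- Let (C,J) be a small site such that the supercompact objects of E = Sh(C,J) form a separating family, and let C_s be a small full subcategory of E containing one representative of each isomorphism class of supercompact objects. Then there exists a Grothendieck topology J_r on C_s whose covering sieves are exactly the sieves containing a morphism that is an epimorphism in E, and there is an equivalence of categories E ≌ Sh(C_s, J_r). -/
open CategoryTheory CategoryTheory.Limits

universe w v u

open Opposite

/-!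
The topos `E = Sh(C, J)` carries the topology `K` whose covering sieves are the jointly
epimorphic ones; concretely, a sieve covers `X` when every section of `X` lifts, locally on `C`,
along one of its members. Sheafified representables form a dense subsite of `(E, K)`, so
`Sh(E, K) ≌ E`. Since the supercompact objects separate, the subcategory `Cs` is cover dense
for `K` as well, and the comparison lemma gives `E ≌ Sh(Cs, J_r)` for the induced topology `J_r`.
A sieve on `c` is `J_r`-covering iff its image in `E` is jointly epimorphic; its members with
source in `Cs` are then still jointly epimorphic, and supercompactness of `c` produces an
epimorphism among them.
-/

namespace CategoryTheory

section Epimorphic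

variable {D E : Type*} [Category D] [Category E]

def Sieve.IsEpimorphic {X : E} (S : Sieve X) : Prop :=
  ∀ ⦃W : E⦄ (g h : X ⟶ W), (∀ ⦃Y : E⦄ (f : Y ⟶ X), S f → f ≫ g = f ≫ h) →
    g = h

lemma Sieve.isEpimorphic_of_epi {X Y : E} {S : Sieve X} {f : Y ⟶ X} [Epi f] (hf : S f) :
    S.IsEpimorphic :=
  fun _ _ _ H => (cancel_epi f).1 (H f hf)

lemma Functor.eq_of_isSeparating_essImage {G : D ⥤ E} (hG : G.essImage.IsSeparating)
    {X W : E} (g h : X ⟶ W) (H : ∀ (d : D) (m : G.obj d ⟶ X), m ≫ g = m ≫ h) : g = h :=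
  hG g h fun _ ⟨d, ⟨e⟩⟩ u => by
    rw [← cancel_epi e.hom]
    simpa using H d (e.hom ≫ u)

lemma Sieve.IsEpimorphic.eq_of_isSeparating_essImage {G : D ⥤ E} (hG : G.essImage.IsSeparating)
    {X : E} {S : Sieve X} (hS : S.IsEpimorphic) {W : E} (g h : X ⟶ W)
    (H : ∀ (d : D) (m : G.obj d ⟶ X), S m → m ≫ g = m ≫ h) : g = h :=
  hS g h fun _ f hf => G.eq_of_isSeparating_essImage hG _ _ fun d m => by
    simpa using H d (m ≫ f) (S.downward_closed hf m)

end Epimorphic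

section SheafifiedYoneda

variable {C : Type u} [SmallCategory C] (J : GrothendieckTopology C)

noncomputable abbrev sheafifiedYoneda : C ⥤ Sheaf J (Type u) := yoneda ⋙ presheafToSheaf J _

variable {J}

noncomputable def sheafifiedYonedaEquiv {c : C} {F : Sheaf J (Type u)} :
    ((sheafifiedYoneda J).obj c ⟶ F) ≃ F.obj.obj (op c) :=
  ((sheafificationAdjunction J _).homEquiv _ _).trans yonedaEquiv

lemma sheafifiedYonedaEquiv_apply {c : C} {F : Sheaf J (Type u)}
    (ψ : (sheafifiedYoneda J).obj c ⟶ F) :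
    sheafifiedYonedaEquiv ψ =
      ψ.hom.app (op c) ((toSheafify J (yoneda.obj c)).app (op c) (𝟙 c)) :=
  rfl

lemma sheafifiedYonedaEquiv_comp {c : C} {F G : Sheaf J (Type u)}
    (ψ : (sheafifiedYoneda J).obj c ⟶ F) (f : F ⟶ G) :
    sheafifiedYonedaEquiv (ψ ≫ f) = f.hom.app (op c) (sheafifiedYonedaEquiv ψ) :=
  rfl

lemma sheafifiedYonedaEquiv_map {c' c : C} (g : c' ⟶ c) :
    sheafifiedYonedaEquiv ((sheafifiedYoneda J).map g) =
      (toSheafify J (yoneda.obj c)).app (op c') g := by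
  rw [sheafifiedYonedaEquiv_apply]
  have hη := ConcreteCategory.congr_hom
    (congr_app (toSheafify_naturality J (yoneda.map g)) (op c')) (𝟙 c')
  simp only [NatTrans.comp_app, ConcreteCategory.comp_apply, yoneda_map_app,
    TypeCat.ofHom_apply, Category.id_comp] at hη
  exact hη.symm

lemma sheafifiedYonedaEquiv_map_comp {c' c : C} (g : c' ⟶ c) {F : Sheaf J (Type u)}
    (ψ : (sheafifiedYoneda J).obj c ⟶ F) :
    sheafifiedYonedaEquiv ((sheafifiedYoneda J).map g ≫ ψ) =
      F.obj.map g.op (sheafifiedYonedaEquiv ψ) := by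
  have hψ := NatTrans.naturality_apply ψ.hom g.op
    ((toSheafify J (yoneda.obj c)).app (op c) (𝟙 c))
  have hη := NatTrans.naturality_apply (toSheafify J (yoneda.obj c)) g.op (𝟙 c)
  rw [sheafifiedYonedaEquiv_comp, sheafifiedYonedaEquiv_map, sheafifiedYonedaEquiv_apply]
  refine (congrArg _ ?_).trans hψ
  simpa using hη

end SheafifiedYoneda

section LocallySurjectiveTopology

variable {C : Type u} [SmallCategory C] {J : GrothendieckTopology C}

def Sieve.imageSubfunctor {X : Sheaf J (Type u)} (S : Sieve X) : Subfunctor X.obj where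
  obj U := {x | ∃ (Y : Sheaf J (Type u)) (f : Y ⟶ X), S f ∧ ∃ y, f.hom.app U y = x}
  map := by
    rintro U V i x ⟨Y, f, hf, y, rfl⟩
    exact ⟨Y, f, hf, Y.obj.map i y, NatTrans.naturality_apply f.hom i y⟩

lemma Sieve.imageSubfunctor_sieveOfSection_pullback {X : Sheaf J (Type u)} (S : Sieve X)
    {U : Cᵒᵖ} (x : X.obj.obj U) {c' : C} (g : c' ⟶ U.unop) :
    (S.imageSubfunctor.sieveOfSection x).pullback g =
      S.imageSubfunctor.sieveOfSection (X.obj.map g.op x) := by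
  ext c'' h
  simp only [Sieve.pullback_apply, Subfunctor.sieveOfSection_apply, op_comp,
    Functor.map_comp, ConcreteCategory.comp_apply]

variable (J)

def locallySurjectiveTopology : GrothendieckTopology (Sheaf J (Type u)) where
  sieves X S := ∀ (U : Cᵒᵖ) (x : X.obj.obj U), S.imageSubfunctor.sieveOfSection x ∈ J U.unop
  top_mem' X U x := by
    refine J.superset_covering (fun c' g _ => ?_) (J.top_mem _)
    exact ⟨X, 𝟙 X, trivial, _, rfl⟩
  pullback_stable' := by
    intro X Y S m hS U y
    refine J.superset_covering (fun c' g hg => ?_) (hS U (m.hom.app U y))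
    obtain ⟨Z, f, hf, z, hz⟩ := hg
    let zh : (sheafifiedYoneda J).obj c' ⟶ Z := sheafifiedYonedaEquiv.symm z
    let yh : (sheafifiedYoneda J).obj c' ⟶ Y := sheafifiedYonedaEquiv.symm (Y.obj.map g.op y)
    have heq : zh ≫ f = yh ≫ m := by
      apply sheafifiedYonedaEquiv.injective
      rw [sheafifiedYonedaEquiv_comp, sheafifiedYonedaEquiv_comp, Equiv.apply_symm_apply,
        Equiv.apply_symm_apply, hz, NatTrans.naturality_apply]
    refine ⟨pullback f m, pullback.snd f m, ?_,
      sheafifiedYonedaEquiv (pullback.lift zh yh heq), ?_⟩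
    · change S (pullback.snd f m ≫ m)
      rw [← pullback.condition]
      exact S.downward_closed hf _
    · rw [← sheafifiedYonedaEquiv_comp, pullback.lift_snd, Equiv.apply_symm_apply]
  transitive' := by
    intro X S hS R hR U x
    refine J.transitive (hS U x) _ (fun c' g hg => ?_)
    obtain ⟨Y, f, hf, y, hy⟩ := hg
    rw [Sieve.imageSubfunctor_sieveOfSection_pullback]
    refine J.superset_covering (fun c'' h hh => ?_) (hR hf (op c') y)
    obtain ⟨Z, f', hf', z, hz⟩ := hh
    refine ⟨Z, f' ≫ f, hf', z, ?_⟩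
    change f.hom.app _ (f'.hom.app _ z) = _
    rw [hz, NatTrans.naturality_apply f.hom h.op, hy]

variable {J}

lemma Sieve.IsEpimorphic.of_mem_locallySurjectiveTopology {X : Sheaf J (Type u)} {S : Sieve X}
    (hS : S ∈ locallySurjectiveTopology J X) : S.IsEpimorphic := by
  intro W g h H
  apply Sheaf.hom_ext
  ext U x
  apply (Presieve.IsSheaf.isSeparated
    ((isSheaf_iff_isSheaf_of_type _ _).1 W.property) _ (hS U x)).ext
  rintro c' f' ⟨Y, u, hu, y, huy⟩
  simp only [TypeCat.Fun.toFun_apply]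
  rw [← NatTrans.naturality_apply g.hom, ← NatTrans.naturality_apply h.hom, ← huy]
  exact ConcreteCategory.congr_hom (congr_app (congr_arg (·.hom) (H u hu)) _) y

/-- Every member of `S` factors through the sheafified union `T` of the images of `S`, so the
inclusion of `T` is epi as well as mono, hence an isomorphism. -/
lemma mem_locallySurjectiveTopology_of_isEpimorphic {X : Sheaf J (Type u)} {S : Sieve X}
    (hS : S.IsEpimorphic) : S ∈ locallySurjectiveTopology J X := by
  let T := S.imageSubfunctor.sheafify J
  let ιT : (⟨T.toFunctor, (isSheaf_iff_isSheaf_of_type _ _).2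
      (S.imageSubfunctor.sheafify_isSheaf ((isSheaf_iff_isSheaf_of_type _ _).1 X.property))⟩ :
      Sheaf J (Type u)) ⟶ X := ⟨T.ι⟩
  have : Mono ιT := Sheaf.Hom.mono_of_presheaf_mono J _ ιT
  have : Epi ιT := ⟨fun g h H => hS g h fun Y f hf => by
    have hfac : f = ObjectProperty.homMk (Subfunctor.lift f.hom fun U _ ⟨y, hy⟩ =>
        S.imageSubfunctor.le_sheafify J U ⟨Y, f, hf, y, hy⟩) ≫ ιT := rfl
    rw [hfac, Category.assoc, Category.assoc, H]⟩
  have : IsIso ιT := isIso_of_mono_of_epi ιT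
  have hT : T = ⊤ := (Subfunctor.eq_top_iff_isIso T).2
    (inferInstanceAs (IsIso ((sheafToPresheaf J _).map ιT)))
  intro U x
  exact (hT ▸ trivial : x ∈ T.obj U)

lemma mem_locallySurjectiveTopology_iff {X : Sheaf J (Type u)} {S : Sieve X} :
    S ∈ locallySurjectiveTopology J X ↔ S.IsEpimorphic :=
  ⟨Sieve.IsEpimorphic.of_mem_locallySurjectiveTopology,
    mem_locallySurjectiveTopology_of_isEpimorphic⟩

variable (J)

lemma functorPushforward_sheafifiedYoneda_mem {c : C} {S : Sieve c} (hS : S ∈ J c) :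
    S.functorPushforward (sheafifiedYoneda J) ∈ locallySurjectiveTopology J _ := by
  rw [mem_locallySurjectiveTopology_iff]
  intro W g h H
  apply sheafifiedYonedaEquiv.injective
  refine (Presieve.IsSheaf.isSeparated
    ((isSheaf_iff_isSheaf_of_type _ _).1 W.property) _ hS).ext fun d s hs => ?_
  rw [← sheafifiedYonedaEquiv_map_comp, ← sheafifiedYonedaEquiv_map_comp,
    H _ (S.image_mem_functorPushforward _ hs)]

/-- Each `(sheafifiedYoneda J).map s` with `s ∈ S` factors through the sheafification of
`S.functorInclusion`, which is therefore epi, i.e. locally surjective. -/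
lemma mem_of_functorPushforward_sheafifiedYoneda_mem {c : C} {S : Sieve c}
    (hS : S.functorPushforward (sheafifiedYoneda J) ∈ locallySurjectiveTopology J _) :
    S ∈ J c := by
  have hepi : Epi ((presheafToSheaf J _).map S.functorInclusion) := ⟨fun g h H =>
    mem_locallySurjectiveTopology_iff.1 hS g h (by
      rintro _ _ ⟨d, s, k, hs, rfl⟩
      have hfac : (sheafifiedYoneda J).map s = (presheafToSheaf J _).map (S.toFunctor s hs) ≫
          (presheafToSheaf J _).map S.functorInclusion := by
        rw [← Functor.map_comp]
        rfl
      rw [hfac, Category.assoc, Category.assoc, Category.assoc, Category.assoc, H])⟩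
  rw [← Sheaf.isLocallySurjective_iff_epi, Presheaf.isLocallySurjective_presheafToSheaf_map_iff]
    at hepi
  refine J.superset_covering (fun d g hg => ?_)
    (Presheaf.imageSieve_mem J S.functorInclusion (U := op c) (𝟙 c))
  obtain ⟨⟨g', hg'⟩, rfl : g' = g ≫ 𝟙 c⟩ := hg
  simpa using hg'

instance : (sheafifiedYoneda J).IsCoverDense (locallySurjectiveTopology J) where
  is_cover X := by
    rw [mem_locallySurjectiveTopology_iff]
    intro W g h H
    apply Sheaf.hom_ext
    ext ⟨c⟩ x
    have := congrArg sheafifiedYonedaEquiv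
      (H (sheafifiedYonedaEquiv.symm x) (Presieve.in_coverByImage _ _))
    simpa only [sheafifiedYonedaEquiv_comp, Equiv.apply_symm_apply, TypeCat.Fun.toFun_apply]
      using this

instance : (sheafifiedYoneda J).IsLocallyFull (locallySurjectiveTopology J) where
  functorPushforward_imageSieve_mem {_ V} f := by
    apply functorPushforward_sheafifiedYoneda_mem
    refine J.superset_covering (fun W g hg => ?_)
      (Presheaf.imageSieve_mem J (toSheafify J (yoneda.obj V)) (sheafifiedYonedaEquiv f))
    obtain ⟨v, hv⟩ := hg
    refine ⟨v, sheafifiedYonedaEquiv.injective ?_⟩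
    rw [sheafifiedYonedaEquiv_map, sheafifiedYonedaEquiv_map_comp]
    exact hv

instance : (sheafifiedYoneda J).IsLocallyFaithful (locallySurjectiveTopology J) where
  functorPushforward_equalizer_mem {_ V} f₁ f₂ hf := by
    apply functorPushforward_sheafifiedYoneda_mem
    exact Presheaf.equalizerSieve_mem J (toSheafify J (yoneda.obj V)) f₁ f₂
      (by rw [← sheafifiedYonedaEquiv_map, ← sheafifiedYonedaEquiv_map, hf])

instance : (sheafifiedYoneda J).IsDenseSubsite J (locallySurjectiveTopology J) where
  functorPushforward_mem_iff :=
    ⟨mem_of_functorPushforward_sheafifiedYoneda_mem J,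
      functorPushforward_sheafifiedYoneda_mem J⟩

variable {J} in
lemma Functor.isCoverDense_locallySurjectiveTopology {D : Type*} [Category D]
    (G : D ⥤ Sheaf J (Type u)) (hG : G.essImage.IsSeparating) :
    G.IsCoverDense (locallySurjectiveTopology J) where
  is_cover _ := mem_locallySurjectiveTopology_iff.2 fun _ g h H =>
    G.eq_of_isSeparating_essImage hG g h fun _ m => H m (Presieve.in_coverByImage G m)

end LocallySurjectiveTopology

lemma Functor.mem_inducedTopology_iff_exists_epi {C D : Type} [SmallCategory C] [Category D]
    {J : GrothendieckTopology C} (G : D ⥤ Sheaf J (Type)) [G.Full] [G.Faithful]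
    (hG : G.essImage.IsSeparating) (hsc : ∀ d, IsSupercompact (G.obj d)) {c : D} (S : Sieve c) :
    S ∈ G.inducedTopology (locallySurjectiveTopology J) c ↔
      ∃ (d : D) (g : d ⟶ c), S g ∧ Epi (G.map g) := by
  have := G.isCoverDense_locallySurjectiveTopology hG
  rw [G.mem_inducedTopology_iff_of_isCoverDense, mem_locallySurjectiveTopology_iff]
  constructor
  · intro hS
    obtain ⟨⟨d, m, hm⟩, hepi⟩ := hsc c
      (fun i : Σ d : D, {m : G.obj d ⟶ G.obj c // S.functorPushforward G m} => G.obj i.1)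
      (fun i => i.2.1)
      (fun _ g h H => hS.eq_of_isSeparating_essImage hG g h fun d m hm => H ⟨d, m, hm⟩)
    obtain ⟨e, s, k, hs, rfl⟩ := hm
    exact ⟨e, s, hs, epi_of_epi k (G.map s)⟩
  · rintro ⟨d, g, hg, hepi⟩
    exact Sieve.isEpimorphic_of_epi (S.image_mem_functorPushforward G hg)

end CategoryTheory

theorem stmt11_general {C : Type} [SmallCategory C] (J : GrothendieckTopology C)
    -- the supercompact objects form a separating family
    (hsep : ∀ ⦃X Y : Sheaf J (Type)⦄ (g h : X ⟶ Y),
      (∀ (S : Sheaf J (Type)), IsSupercompact S → ∀ (u : S ⟶ X), u ≫ g = u ≫ h) →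
        g = h)
    -- `Cs` is a small full subcategory of the sheaf topos, embedded by `ι`, ...
    (Cs : Type) [SmallCategory Cs] (ι : Cs ⥤ Sheaf J (Type))
    [ι.Full] [ι.Faithful]
    -- ... consisting of supercompact objects, ...
    (hobj : ∀ c : Cs, IsSupercompact (ι.obj c))
    -- ... containing a representative of each isomorphism class of supercompacts, ...
    (hrep : ∀ X : Sheaf J (Type), IsSupercompact X → ∃ c : Cs, Nonempty (ι.obj c ≅ X)) :
    ∃ Jr : GrothendieckTopology Cs,
      (∀ (c : Cs) (S : Sieve c),
        S ∈ Jr c ↔ ∃ (d : Cs) (g : d ⟶ c), S.arrows g ∧ Epi (ι.map g)) ∧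
      Nonempty (Sheaf J (Type) ≌ Sheaf Jr (Type)) := by
  have hι : ι.essImage.IsSeparating := ObjectProperty.IsSeparating.of_le hsep hrep
  have := ι.isCoverDense_locallySurjectiveTopology hι
  refine ⟨_, fun c S => ι.mem_inducedTopology_iff_exists_epi hι hobj S, ⟨?_⟩⟩
  exact (Functor.IsDenseSubsite.sheafEquiv J _ (sheafifiedYoneda J) _).trans
    (ι.sheafInducedTopologyEquivOfIsCoverDense _ _).symm

theorem stmt11 {C : Type} [SmallCategory C] (J : GrothendieckTopology C)
    -- the supercompact objects form a separating family
    (hsep : ∀ ⦃X Y : Sheaf J (Type)⦄ (g h : X ⟶ Y),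
      (∀ (S : Sheaf J (Type)), IsSupercompact S → ∀ (u : S ⟶ X), u ≫ g = u ≫ h) →
        g = h)
    -- `Cs` is a small full subcategory of the sheaf topos, embedded by `ι`, ...
    (Cs : Type) [SmallCategory Cs] (ι : Cs ⥤ Sheaf J (Type))
    [ι.Full] [ι.Faithful]
    -- ... consisting of supercompact objects, ...
    (hobj : ∀ c : Cs, IsSupercompact (ι.obj c))
    -- ... containing a representative of each isomorphism class of supercompacts, ...
    (hrep : ∀ X : Sheaf J (Type), IsSupercompact X → ∃ c : Cs, Nonempty (ι.obj c ≅ X))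
    -- ... exactly one from each class.
    (huniq : ∀ c c' : Cs, Nonempty (ι.obj c ≅ ι.obj c') → c = c') :
    ∃ Jr : GrothendieckTopology Cs,
      (∀ (c : Cs) (S : Sieve c),
        S ∈ Jr c ↔ ∃ (d : Cs) (g : d ⟶ c), S.arrows g ∧ Epi (ι.map g)) ∧
      Nonempty (Sheaf J (Type) ≌ Sheaf Jr (Type)) :=
  stmt11_general J hsep Cs ι hobj hrep
end

section
/- Let (C,J) be a small site and E = Sh(C,J). A morphism f : A → B of E is an epimorphism if and only if, in the pushout square of f along the unique morphism A → 1 to the terminal object (with pushout B/f), the induced morphism x : 1 → B/f is an isomorphism. -/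
/-!
Since every morphism out of the terminal object is mono, `x : 1 ⟶ B/f` is mono; if `f` is epi,
so is its pushout `x`, and a sheaf topos is balanced. Conversely, factor `f = m ∘ e` with `e` epi
and `m` mono. Pushing out along the epi `e` does not change the point `1`, so `x` is also the
pushout of the mono `m` along `Z ⟶ 1`; in an adhesive category such a pushout square is a
pullback, so `m` is a pullback of the isomorphism `x` and hence invertible.
-/

open CategoryTheory CategoryTheory.Limits

namespace CategoryTheory

variable {C : Type*} [Category C]

theorem Adhesive.isIso_of_isPushout_of_mono_left [Adhesive C] {W X Y Z : C} {f : W ⟶ X}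
    {g : W ⟶ Y} {h : X ⟶ Z} {i : Y ⟶ Z} (H : IsPushout f g h i) [Mono f] [IsIso i] : IsIso f :=
  (Adhesive.isPullback_of_isPushout_of_mono_left H).isIso_fst_of_isIso

namespace Limits

variable [HasTerminal C]

theorem IsPushout.of_epi_terminal_from {A Z : C} (e : A ⟶ Z) [Epi e] :
    IsPushout e (terminal.from A) (terminal.from Z) (𝟙 (⊤_ C)) := by
  refine IsPushout.of_isColimit (PushoutCocone.IsColimit.mk (Subsingleton.elim _ _)
    (fun s => s.inr) (fun s => ?_) (fun s => Category.id_comp _)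
    (fun s m _ hm => by simpa using hm))
  rw [← cancel_epi e, s.condition, ← Category.assoc]
  exact congrArg (· ≫ s.inr) (Subsingleton.elim _ _)

theorem isIso_pushout_inr_terminal_from_of_epi [Balanced C] {A B : C} (f : A ⟶ B)
    [HasPushout f (terminal.from A)] [Epi f] : IsIso (pushout.inr f (terminal.from A)) :=
  have : Mono (pushout.inr f (terminal.from A)) := terminalIsTerminal.mono_from _
  isIso_of_mono_of_epi _

theorem epi_of_isIso_pushout_inr_terminal_from [Adhesive C] {A Z B : C} {f : A ⟶ B}
    (e : A ⟶ Z) (m : Z ⟶ B) [Epi e] [Mono m] (fac : e ≫ m = f) [HasPushout f (terminal.from A)]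
    [IsIso (pushout.inr f (terminal.from A))] : Epi f := by
  subst fac
  have hm : IsPushout m (terminal.from Z) (pushout.inl (e ≫ m) (terminal.from A))
      (pushout.inr (e ≫ m) (terminal.from A)) :=
    IsPushout.of_left (by simpa only [Category.id_comp] using IsPushout.of_hasPushout (e ≫ m) (terminal.from A))
      (by rw [← cancel_epi e, ← Category.assoc, pushout.condition, ← Category.assoc,
        terminal.comp_from])
      (IsPushout.of_epi_terminal_from e)
  have : IsIso m := Adhesive.isIso_of_isPushout_of_mono_left hm
  infer_instance

theorem epi_iff_isIso_pushout_inr_terminal_from [Adhesive C] [HasImages C] [HasEqualizers C]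
    {A B : C} (f : A ⟶ B) [HasPushout f (terminal.from A)] :
    Epi f ↔ IsIso (pushout.inr f (terminal.from A)) :=
  ⟨fun _ => isIso_pushout_inr_terminal_from_of_epi f,
    fun _ => epi_of_isIso_pushout_inr_terminal_from _ _ (image.fac f)⟩

end Limits

end CategoryTheory

theorem stmt12 {C : Type} [SmallCategory C] (J : GrothendieckTopology C)
    {A B : Sheaf J (Type)} (f : A ⟶ B) :
    Epi f ↔ IsIso (pushout.inr f (terminal.from A)) :=
  epi_iff_isIso_pushout_inr_terminal_from f
end

section
/- Let (C,J) be a small site, E = Sh(C,J), and C_s the full subcategory of E on the supercompact objects. If A is a supercompact object which is well-supported, then a morphism A → B of C_s is an epimorphism in the category C_s if and only if it is an epimorphism in E. -/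
open CategoryTheory CategoryTheory.Limits

universe w v u

/-- `f` is an epimorphism in the full subcategory of objects satisfying `P`. -/
def EpiIn {C : Type u} [Category.{v} C] (P : C → Prop) {A B : C}
    (f : A ⟶ B) : Prop :=
  ∀ ⦃Y : C⦄, P Y → ∀ (g h : B ⟶ Y), f ≫ g = f ≫ h → g = h

/-!
Let `g, h : B ⟶ Y` be equalized by `f`, with equalizer `E ⟶ B`. Since `A` maps to `E`, `E` is
well-supported, so collapsing `E` to a point gives an epimorphism `B ⟶ B ⊔_E 1`. Jointly
epimorphic families of sheaves are stable under pullback, hence quotients of supercompact sheaves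
are supercompact and `B ⊔_E 1` lies in the subcategory. There `f` equalizes the two maps
`B ⟶ B ⊔_E 1` (the quotient map and the constant one), so they agree. As a sheaf topos is
adhesive, the pushout square is also a pullback square, which makes `E ⟶ B` split epi; so `g = h`.
-/

open Opposite

theorem JointlyEpic.epi_of_fac {C : Type u} [Category.{v} C] {I : Type w} {A : I → C} {X S : C}
    {f : ∀ i, A i ⟶ X} (hf : JointlyEpic f) (ι : S ⟶ X) (a : ∀ i, A i ⟶ S)
    (fac : ∀ i, a i ≫ ι = f i) : Epi ι :=
  ⟨fun g h hgh => hf g h fun i => by rw [← fac i, Category.assoc, Category.assoc, hgh]⟩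

theorem CategoryTheory.Adhesive.isSplitEpi_of_pushout_inl_eq {C : Type u} [Category.{v} C]
    [Adhesive C] [HasTerminal C] {E B : C} (m : E ⟶ B) [Mono m]
    (h : pushout.inl m (terminal.from E) = terminal.from B ≫ pushout.inr m (terminal.from E)) :
    IsSplitEpi m :=
  have hpb := Adhesive.isPullback_of_isPushout_of_mono_left (IsPushout.of_hasPushout m _)
  ⟨⟨hpb.lift (𝟙 B) (terminal.from B) (by rw [Category.id_comp, h]), hpb.lift_fst _ _ _⟩⟩

section SheafOfTypes

variable {C : Type} [SmallCategory C] {J : GrothendieckTopology C}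

theorem CategoryTheory.Sheaf.hom_ext_of_sheafify_eq_top {X Y : Sheaf J (Type)}
    {G : Subfunctor X.obj} (hG : G.sheafify J = ⊤) {g h : X ⟶ Y}
    (hgh : G.ι ≫ g.hom = G.ι ≫ h.hom) : g = h := by
  apply Sheaf.hom_ext
  ext U s
  have hs : G.sieveOfSection s ∈ J (unop U) := by
    change s ∈ (G.sheafify J).obj U
    simp [hG]
  refine (((isSheaf_iff_isSheaf_of_type _ _).1 Y.property).isSeparated _ hs).ext fun V k hk => ?_
  change Y.obj.map k.op (g.hom.app U s) = Y.obj.map k.op (h.hom.app U s)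
  rw [← NatTrans.naturality_apply, ← NatTrans.naturality_apply]
  exact ConcreteCategory.congr_hom (NatTrans.congr_app hgh (op V))
    (⟨_, hk⟩ : G.toFunctor.obj (op V))

theorem jointlyEpic_iff_sheafify_iSup_range_eq_top {I : Type} {A : I → Sheaf J (Type)}
    {X : Sheaf J (Type)} (f : ∀ i, A i ⟶ X) :
    JointlyEpic f ↔ (⨆ i, Subfunctor.range (f i).hom).sheafify J = ⊤ := by
  set G := ⨆ i, Subfunctor.range (f i).hom
  constructor
  · intro hf
    let S : Sheaf J (Type) := ⟨(G.sheafify J).toFunctor, (isSheaf_iff_isSheaf_of_type _ _).2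
      (G.sheafify_isSheaf ((isSheaf_iff_isSheaf_of_type _ _).1 X.property))⟩
    let ι : S ⟶ X := ObjectProperty.homMk (G.sheafify J).ι
    have : Mono ι :=
      (sheafToPresheaf J _).mono_of_mono_map (inferInstanceAs (Mono (G.sheafify J).ι))
    have : Epi ι := hf.epi_of_fac ι (fun i => ObjectProperty.homMk (Subfunctor.lift (f i).hom
      ((le_iSup (fun i => Subfunctor.range (f i).hom) i).trans (G.le_sheafify J)))) fun i => rfl
    have : IsIso ι := isIso_of_mono_of_epi ι
    exact (Subfunctor.eq_top_iff_isIso _).2 (inferInstanceAs (IsIso ((sheafToPresheaf J _).map ι)))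
  · intro hG Y g h hgh
    refine Sheaf.hom_ext_of_sheafify_eq_top hG ?_
    ext U ⟨s, hs⟩
    obtain ⟨i, t, rfl⟩ : ∃ i t, (f i).hom.app U t = s := by simpa [G] using hs
    exact ConcreteCategory.congr_hom (NatTrans.congr_app (congrArg (·.hom) (hgh i)) U) t

theorem JointlyEpic.pullback_snd {I : Type} {A : I → Sheaf J (Type)} {X B : Sheaf J (Type)}
    {f : ∀ i, A i ⟶ X} (hf : JointlyEpic f) (q : B ⟶ X) :
    JointlyEpic fun i => pullback.snd (f i) q := by
  rw [jointlyEpic_iff_sheafify_iSup_range_eq_top] at hf ⊢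
  refine eq_top_iff.2 fun U s _ => ?_
  have hqs : q.hom.app U s ∈ ((⨆ i, Subfunctor.range (f i).hom).sheafify J).obj U := by
    simp [hf]
  refine J.superset_covering (fun V k hk => ?_) hqs
  obtain ⟨i, t, ht⟩ : ∃ i t, (f i).hom.app (op V) t = X.obj.map k.op (q.hom.app U s) := by
    simpa using hk
  have hpb := (IsPullback.of_hasPullback (f i) q).map
    (sheafToPresheaf J (Type) ⋙ (evaluation _ _).obj (op V))
  have hrange : Set.range ((pullback.snd (f i) q).hom.app (op V)) =
      q.hom.app (op V) ⁻¹' Set.range ((f i).hom.app (op V)) :=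
    Types.range_snd_of_isPullback hpb
  change B.obj.map k.op s ∈ (⨆ i, Subfunctor.range (pullback.snd (f i) q).hom).obj (op V)
  simp only [Subfunctor.iSup_obj, Set.mem_iUnion]
  refine ⟨i, ?_⟩
  change _ ∈ Set.range _
  rw [hrange]
  exact ⟨t, ht.trans (NatTrans.naturality_apply q.hom k.op s).symm⟩

theorem IsSupercompact.of_epi {B Q : Sheaf J (Type)} (hB : IsSupercompact B) (π : B ⟶ Q)
    [Epi π] : IsSupercompact Q := by
  intro I A f hf
  obtain ⟨i, hi⟩ := hB _ _ (hf.pullback_snd π)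
  have : Epi (pullback.fst (f i) π ≫ f i) := by
    rw [pullback.condition]
    exact epi_comp _ _
  exact ⟨i, epi_of_epi (pullback.fst (f i) π) (f i)⟩

end SheafOfTypes

theorem stmt13_general {C : Type} [SmallCategory C] (J : GrothendieckTopology C)
    {A B : Sheaf J (Type)} (hB : IsSupercompact B)
    (hws : Epi (terminal.from A)) (f : A ⟶ B) :
    EpiIn IsSupercompact f ↔ Epi f := by
  refine ⟨fun hf => ⟨fun {Y} g h hgh => ?_⟩, fun _ _ _ _ _ => (cancel_epi f).1⟩
  let m := equalizer.ι g h
  let t := terminal.from (equalizer g h)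
  have hfm : equalizer.lift f hgh ≫ m = f := equalizer.lift_ι f hgh
  have : Epi t := by
    rw [← terminal.comp_from (equalizer.lift f hgh)] at hws
    exact epi_of_epi (equalizer.lift f hgh) t
  have hQ : IsSupercompact (pushout m t) := hB.of_epi (pushout.inl m t)
  have hcollapse : pushout.inl m t = terminal.from B ≫ pushout.inr m t := by
    refine hf hQ _ _ ?_
    rw [← hfm, Category.assoc, Category.assoc, pushout.condition, ← Category.assoc m,
      terminal.comp_from]
  have : IsSplitEpi m := Adhesive.isSplitEpi_of_pushout_inl_eq m hcollapse
  exact (cancel_epi m).1 (equalizer.condition g h)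

theorem stmt13 {C : Type} [SmallCategory C] (J : GrothendieckTopology C)
    {A B : Sheaf J (Type)} (hA : IsSupercompact A) (hB : IsSupercompact B)
    (hws : Epi (terminal.from A)) (f : A ⟶ B) :
    EpiIn IsSupercompact f ↔ Epi f :=
  stmt13_general J hB hws f
end

section
/- Let (C,J) be a small site and E = Sh(C,J), with initial object 0 and terminal object 1. The following are equivalent: (1) E is two-valued, i.e. 0 is not isomorphic to 1 and every subterminal object of E is either initial or terminal; (2) every object of E is either well-supported or initial, but not both; (3) 0 is not isomorphic to 1 and E has a separating family consisting of well-supported objects. -/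
open CategoryTheory CategoryTheory.Limits

/-!
In a balanced category with equalizers, images and strict initial objects, such as a sheaf
topos, the image of `X ⟶ 1` (the support of `X`) is subterminal, `X` is initial iff its support
is, and `X` is well-supported iff its support is terminal; this gives (1) ⇔ (2). For (1) ⇒ (3),
the initial members of any separating family (e.g. the sheafified representables) can be
discarded, since maps out of an initial object agree anyway. For (3) ⇒ (1), a subterminal object
receiving a map from a well-supported object is itself well-supported, hence terminal; one
receiving no such map makes `0 ⟶ U` vacuously epi, and it is mono since `0` is strict, so `U` is
initial.
-/

universe w

namespace CategoryTheory

variable {𝓔 : Type*} [Category 𝓔]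

lemma ObjectProperty.isSeparating_ofObj_iff {ι : Type*} (G : ι → 𝓔) :
    (ObjectProperty.ofObj G).IsSeparating ↔
      ∀ ⦃X Y : 𝓔⦄ (f g : X ⟶ Y), (∀ (i : ι) (u : G i ⟶ X), u ≫ f = u ≫ g) → f = g := by
  refine ⟨fun hG X Y f g hfg => hG f g ?_,
    fun hG X Y f g hfg => hG f g fun i => hfg _ ⟨i⟩⟩
  rintro _ ⟨i⟩
  exact hfg i

variable [HasTerminal 𝓔]

variable (𝓔) in
def IsTwoValued [HasInitial 𝓔] : Prop :=
  ¬ Nonempty ((⊥_ 𝓔) ≅ ⊤_ 𝓔) ∧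
    ∀ X : 𝓔, Mono (terminal.from X) → Nonempty (IsInitial X) ∨ Nonempty (IsTerminal X)

lemma nonempty_isTerminal_of_mono_of_epi [Balanced 𝓔] {X : 𝓔} [Mono (terminal.from X)]
    [Epi (terminal.from X)] : Nonempty (IsTerminal X) :=
  have := isIso_of_mono_of_epi (terminal.from X)
  ⟨terminalIsTerminal.ofIso (asIso (terminal.from X)).symm⟩

lemma epi_terminal_from_or_isInitial [HasImages 𝓔] [HasEqualizers 𝓔]
    [HasStrictInitialObjects 𝓔]
    (h : ∀ X : 𝓔, Mono (terminal.from X) → Nonempty (IsInitial X) ∨ Nonempty (IsTerminal X))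
    (X : 𝓔) : Epi (terminal.from X) ∨ Nonempty (IsInitial X) := by
  have : Mono (terminal.from (image (terminal.from X))) := by
    rw [terminal.hom_ext (terminal.from _) (image.ι _)]
    infer_instance
  rcases h _ this with hI | hI <;> obtain ⟨hI⟩ := hI
  · have := hI.isIso_to (factorThruImage (terminal.from X))
    exact Or.inr ⟨hI.ofIso (asIso (factorThruImage (terminal.from X))).symm⟩
  · have : IsSplitEpi (image.ι (terminal.from X)) :=
      .mk' ⟨hI.from _, terminal.hom_ext _ _⟩
    exact Or.inl (image.fac (terminal.from X) ▸ epi_comp _ _)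

lemma not_epi_terminal_from_of_isInitial [HasInitial 𝓔] [HasStrictInitialObjects 𝓔]
    [Balanced 𝓔] (h : ¬ Nonempty ((⊥_ 𝓔) ≅ ⊤_ 𝓔)) {X : 𝓔} (hX : IsInitial X) :
    ¬ Epi (terminal.from X) := by
  intro
  have := hX.mono_from (terminal.from X)
  obtain ⟨hX'⟩ := nonempty_isTerminal_of_mono_of_epi (X := X)
  exact h ⟨(initialIsInitial.uniqueUpToIso hX).trans (hX'.uniqueUpToIso terminalIsTerminal)⟩

lemma isTwoValued_iff [HasInitial 𝓔] [HasImages 𝓔] [HasEqualizers 𝓔]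
    [HasStrictInitialObjects 𝓔] [Balanced 𝓔] :
    IsTwoValued 𝓔 ↔ ∀ X : 𝓔, (Epi (terminal.from X) ∨ Nonempty (IsInitial X)) ∧
      ¬(Epi (terminal.from X) ∧ Nonempty (IsInitial X)) := by
  constructor
  · rintro ⟨h0, h1⟩ X
    exact ⟨epi_terminal_from_or_isInitial h1 X,
      fun ⟨hepi, ⟨hX⟩⟩ => not_epi_terminal_from_of_isInitial h0 hX hepi⟩
  · intro h
    refine ⟨fun ⟨e⟩ => (h (⊤_ 𝓔)).2 ⟨?_, ⟨initialIsInitial.ofIso e⟩⟩, fun X _ => ?_⟩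
    · rw [terminal.hom_ext (terminal.from _) (𝟙 _)]
      infer_instance
    · rcases (h X).1 with _ | hX
      · exact Or.inr nonempty_isTerminal_of_mono_of_epi
      · exact Or.inl hX

lemma ObjectProperty.IsSeparating.inf_epi_terminal_from {P : ObjectProperty 𝓔}
    (hP : P.IsSeparating) (h : ∀ X : 𝓔, Epi (terminal.from X) ∨ Nonempty (IsInitial X)) :
    (P ⊓ fun X => Epi (terminal.from X)).IsSeparating := by
  intro X Y f g hfg
  refine hP f g fun G hG u => ?_
  rcases h G with hG' | ⟨⟨hG'⟩⟩
  · exact hfg G ⟨hG, hG'⟩ u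
  · exact hG'.hom_ext _ _

lemma nonempty_isInitial_or_isTerminal_of_isSeparating [HasInitial 𝓔]
    [HasStrictInitialObjects 𝓔] [Balanced 𝓔]
    {P : ObjectProperty 𝓔} (hP : P.IsSeparating) (hws : ∀ G, P G → Epi (terminal.from G))
    (X : 𝓔) [Mono (terminal.from X)] : Nonempty (IsInitial X) ∨ Nonempty (IsTerminal X) := by
  by_cases hX : ∃ G, P G ∧ Nonempty (G ⟶ X)
  · obtain ⟨G, hG, ⟨u⟩⟩ := hX
    have := hws G hG
    have : Epi (u ≫ terminal.from X) := by rwa [terminal.comp_from]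
    have := epi_of_epi u (terminal.from X)
    exact Or.inr nonempty_isTerminal_of_mono_of_epi
  · have : Epi (initial.to X) :=
      ⟨fun f g _ => hP f g fun G hG u => (hX ⟨G, hG, ⟨u⟩⟩).elim⟩
    have := isIso_of_mono_of_epi (initial.to X)
    exact Or.inl ⟨initialIsInitial.ofIso (asIso (initial.to X))⟩

lemma isTwoValued_iff_exists_isSeparating [HasInitial 𝓔] [HasImages 𝓔] [HasEqualizers 𝓔]
    [HasStrictInitialObjects 𝓔] [Balanced 𝓔] {ι : Type w} {S : ι → 𝓔}
    (hS : (ObjectProperty.ofObj S).IsSeparating) :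
    IsTwoValued 𝓔 ↔ ¬ Nonempty ((⊥_ 𝓔) ≅ ⊤_ 𝓔) ∧
      ∃ (I : Type w) (G : I → 𝓔), (∀ i, Epi (terminal.from (G i))) ∧
        (ObjectProperty.ofObj G).IsSeparating := by
  constructor
  · rintro ⟨h0, h1⟩
    refine ⟨h0, {i // Epi (terminal.from (S i))}, fun i => S i.1, fun i => i.2, ?_⟩
    refine (hS.inf_epi_terminal_from (epi_terminal_from_or_isInitial h1)).of_le ?_
    rintro _ ⟨⟨i⟩, hi⟩
    exact ObjectProperty.ofObj_apply (fun j : {i // Epi (terminal.from (S i))} => S j.1)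
      ⟨i, hi⟩
  · rintro ⟨h0, I, G, hws, hG⟩
    refine ⟨h0, fun X _ => nonempty_isInitial_or_isTerminal_of_isSeparating hG ?_ X⟩
    rintro _ ⟨i⟩
    exact hws i

end CategoryTheory

theorem stmt14 {C : Type} [SmallCategory C] (J : GrothendieckTopology C) :
    -- (1) ↔ (2)
    (((¬ Nonempty ((⊥_ (Sheaf J (Type))) ≅ ⊤_ (Sheaf J (Type)))) ∧
        ∀ X : Sheaf J (Type), Mono (terminal.from X) →
          (Nonempty (IsInitial X) ∨ Nonempty (IsTerminal X))) ↔
      (∀ X : Sheaf J (Type),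
        (Epi (terminal.from X) ∨ Nonempty (IsInitial X)) ∧
          ¬(Epi (terminal.from X) ∧ Nonempty (IsInitial X)))) ∧
    -- (1) ↔ (3)
    (((¬ Nonempty ((⊥_ (Sheaf J (Type))) ≅ ⊤_ (Sheaf J (Type)))) ∧
        ∀ X : Sheaf J (Type), Mono (terminal.from X) →
          (Nonempty (IsInitial X) ∨ Nonempty (IsTerminal X))) ↔
      ((¬ Nonempty ((⊥_ (Sheaf J (Type))) ≅ ⊤_ (Sheaf J (Type)))) ∧
        ∃ (I : Type) (G : I → Sheaf J (Type)),
          (∀ i, Epi (terminal.from (G i))) ∧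
            ∀ ⦃X Y : Sheaf J (Type)⦄ (g h : X ⟶ Y),
              (∀ (i : I) (u : G i ⟶ X), u ≫ g = u ≫ h) → g = h)) := by
  refine ⟨isTwoValued_iff, ?_⟩
  simpa only [IsTwoValued, ObjectProperty.isSeparating_ofObj_iff] using
    isTwoValued_iff_exists_isSeparating (Sheaf.isSeparating J Types.isSeparator_punit)
end

section
/- Let L : E → F and R : F → E be an adjoint pair of functors (L ⊣ R) between categories E and F, each of which has a strict initial object. Then L reflects initial objects (i.e. if L(X) is initial then X is initial) if and only if R preserves the initial object (i.e. R applied to the initial object of F is initial in E). -/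
open CategoryTheory CategoryTheory.Limits

universe v₁ v₂ u₁ u₂

namespace CategoryTheory.Adjunction

variable {E : Type u₁} {F : Type u₂} [Category.{v₁} E] [Category.{v₂} F]
  {L : E ⥤ F} {R : F ⥤ E}

/-- The counit `L (R I) ⟶ I` lands in a strict initial object. -/
noncomputable def isInitialLeftObjRightObj [HasStrictInitialObjects F] (adj : L ⊣ R) {I : F}
    (hI : IsInitial I) : IsInitial (L.obj (R.obj I)) :=
  hI.ofStrict (adj.counit.app I)

/-- The transpose of `L X ⟶ I` is a map `X ⟶ R I` into a strict initial object. -/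
noncomputable def isInitialOfIsInitialLeftObj [HasStrictInitialObjects E] (adj : L ⊣ R)
    {I : F} (hRI : IsInitial (R.obj I)) {X : E} (hLX : IsInitial (L.obj X)) : IsInitial X :=
  hRI.ofStrict (adj.homEquiv X I (hLX.to I))

end CategoryTheory.Adjunction

theorem stmt15_general {E : Type u₁} {F : Type u₂} [Category.{v₁} E] [Category.{v₂} F]
    [HasInitial F]
    [HasStrictInitialObjects E] [HasStrictInitialObjects F]
    (L : E ⥤ F) (R : F ⥤ E) (adj : L ⊣ R) :
    (∀ X : E, Nonempty (IsInitial (L.obj X)) → Nonempty (IsInitial X)) ↔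
      Nonempty (IsInitial (R.obj (⊥_ F))) := by
  constructor
  · intro reflects
    exact reflects _ ⟨adj.isInitialLeftObjRightObj initialIsInitial⟩
  · rintro ⟨hR⟩ X ⟨hLX⟩
    exact ⟨adj.isInitialOfIsInitialLeftObj hR hLX⟩

theorem stmt15 {E : Type u₁} {F : Type u₂} [Category.{v₁} E] [Category.{v₂} F]
    [HasInitial E] [HasInitial F]
    [HasStrictInitialObjects E] [HasStrictInitialObjects F]
    (L : E ⥤ F) (R : F ⥤ E) (adj : L ⊣ R) :
    (∀ X : E, Nonempty (IsInitial (L.obj X)) → Nonempty (IsInitial X)) ↔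
      Nonempty (IsInitial (R.obj (⊥_ F))) :=
  stmt15_general L R adj
end

section
/- Let T be a class of morphisms in a category C satisfying: (1) T contains all identities; (2) T is closed under composition; (3) for any f : C → D in T and any g : B → D in C, there is a commutative square with top edge f' : A → B belonging to T and sides completing the square to f and g; and (4) if a composite f ∘ g belongs to T then f belongs to T. Then T is stable under all pullbacks that exist in C: for any pullback square of f ∈ T along a morphism g, the morphism of the square opposite f also belongs to T. -/
open CategoryTheory CategoryTheory.Limits

universe v u

theorem stmt17_general {C : Type u} [Category.{v} C] (T : MorphismProperty C)
    -- (3) stability: T-morphisms can be "pulled back" weakly along any morphism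
    (h3 : ∀ {B D E : C} (f : E ⟶ D), T f → ∀ (g : B ⟶ D),
      ∃ (A : C) (f' : A ⟶ B) (g' : A ⟶ E), T f' ∧ f' ≫ g = g' ≫ f)
    -- (4) push-forward property
    (h4 : ∀ {X Y Z : C} (g : X ⟶ Y) (f : Y ⟶ Z), T (g ≫ f) → T f) :
    -- conclusion: T is stable under all pullbacks that exist in C
    ∀ {P B D E : C} (f : E ⟶ D) (g : B ⟶ D) (p : P ⟶ B) (q : P ⟶ E),
      T f → IsPullback p q g f → T p := by
  intro P B D E f g p q hf hpb
  obtain ⟨A, f', g', hf', hcomm⟩ := h3 f hf g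
  exact h4 (hpb.lift f' g' hcomm) p (by rwa [hpb.lift_fst])

theorem stmt17 {C : Type u} [Category.{v} C] (T : MorphismProperty C)
    -- (1) T contains all identities
    (h1 : ∀ X : C, T (𝟙 X))
    -- (2) T is closed under composition
    (h2 : ∀ {X Y Z : C} (f : X ⟶ Y) (g : Y ⟶ Z), T f → T g → T (f ≫ g))
    -- (3) stability: T-morphisms can be "pulled back" weakly along any morphism
    (h3 : ∀ {B D E : C} (f : E ⟶ D), T f → ∀ (g : B ⟶ D),
      ∃ (A : C) (f' : A ⟶ B) (g' : A ⟶ E), T f' ∧ f' ≫ g = g' ≫ f)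
    -- (4) push-forward property
    (h4 : ∀ {X Y Z : C} (g : X ⟶ Y) (f : Y ⟶ Z), T (g ≫ f) → T f) :
    -- conclusion: T is stable under all pullbacks that exist in C
    ∀ {P B D E : C} (f : E ⟶ D) (g : B ⟶ D) (p : P ⟶ B) (q : P ⟶ E),
      T f → IsPullback p q g f → T p :=
  stmt17_general T h3 h4
end

section
/- Let (C,J) and (D,K) be small sites and let f* : Sh(C,J) → Sh(D,K) be a comonadic left adjoint functor (the inverse image of a surjective geometric morphism). Then f* reflects supercompact objects, compact objects, and initial objects: if f*(X) is supercompact (respectively compact, respectively initial) then X is supercompact (respectively compact, respectively initial). -/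
open CategoryTheory CategoryTheory.Limits

universe w v u

/-!
A comonadic left adjoint `F` is faithful and creates colimits. Being a left adjoint, it carries
jointly epimorphic families to jointly epimorphic families (transpose the two test maps along
the adjunction); being faithful, it reflects epimorphisms and joint epimorphicity. So a covering
family of `X` maps to a covering family of `F X`, and an epimorphism (or a finite jointly
epimorphic subfamily) found there already is one over `X`. Initial objects are reflected because
`F` creates the empty colimit.
-/

section

variable {C : Type u} [Category.{v} C] {D : Type*} [Category D]

namespace JointlyEpic

variable {I : Type w} {A : I → C} {X : C} {f : ∀ i, A i ⟶ X}

lemma of_map (F : C ⥤ D) [F.Faithful] (h : JointlyEpic fun i => F.map (f i)) :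
    JointlyEpic f := fun _ g g' hgg' =>
  F.map_injective <| h _ _ fun i => by rw [← F.map_comp, ← F.map_comp, hgg' i]

lemma map (F : C ⥤ D) [F.IsLeftAdjoint] (h : JointlyEpic f) :
    JointlyEpic fun i => F.map (f i) := by
  intro Y g g' hgg'
  let adj := Adjunction.ofIsLeftAdjoint F
  apply (adj.homEquiv X Y).injective
  refine h _ _ fun i => ?_
  rw [← adj.homEquiv_naturality_left, ← adj.homEquiv_naturality_left, hgg' i]

end JointlyEpic

instance ComonadicLeftAdjoint.faithful (F : C ⥤ D) [ComonadicLeftAdjoint F] : F.Faithful :=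
  .of_iso (Comonad.comparisonForget (comonadicAdjunction F))

variable (F : C ⥤ D) [F.IsLeftAdjoint] [F.Faithful] {X : C}

lemma IsSupercompact.of_map (h : IsSupercompact (F.obj X)) : IsSupercompact X := by
  intro I A f hf
  obtain ⟨i, hi⟩ := h _ _ (hf.map F)
  exact ⟨i, F.epi_of_epi_map hi⟩

lemma IsCompactObj.of_map (h : IsCompactObj (F.obj X)) : IsCompactObj X := by
  intro I A f hf
  obtain ⟨s, hs⟩ := h _ _ (hf.map F)
  exact ⟨s, hs.of_map F⟩

end

theorem stmt19 {C : Type} [SmallCategory C] {D : Type} [SmallCategory D]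
    (J : GrothendieckTopology C) (K : GrothendieckTopology D)
    (F : Sheaf J (Type) ⥤ Sheaf K (Type)) [ComonadicLeftAdjoint F]
    (X : Sheaf J (Type)) :
    (IsSupercompact (F.obj X) → IsSupercompact X) ∧
    (IsCompactObj (F.obj X) → IsCompactObj X) ∧
    (Nonempty (IsInitial (F.obj X)) → Nonempty (IsInitial X)) := by
  let := comonadicCreatesColimits F
  exact ⟨.of_map F, .of_map F, fun ⟨h⟩ => ⟨h.isInitialOfObj F X⟩⟩
end
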